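/- Let s ∈ ℂ and define the sequence (w_k)_{k≥1} by the recursion δ_{k,1} = -(s/(2(2k+1)) + 1/2) w_{k+1} + ∑_{n=0}^{k-1} w_{k-n}/((2n+1)(2n+3)) for k = 1, 2, ..., with w_1 arbitrary. Then the generating function Υ(t) = ∑_{k≥1} w_k t^{2k-1}/(2k-1) satisfies the ODE 0 = t² + (s/2)(Υ(t)/t - w_1) - w_1/2 - (1/(4t)) Υ'(t)(t²-1) log((1+t)/(1-t)) as an identity of formal power series in t. -/

import Mathlib

/-- Shift of a power series: `shift f = f/t` when `f` has zero constant term. -/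
noncomputable def shift (f : PowerSeries ℂ) : PowerSeries ℂ :=
  PowerSeries.mk fun m => PowerSeries.coeff (m + 1) f

/-- Formal derivative of a power series. -/
noncomputable def dSer (f : PowerSeries ℂ) : PowerSeries ℂ :=
  PowerSeries.mk fun m => ((m : ℂ) + 1) * PowerSeries.coeff (m + 1) f

/-- The generating function `Υ(t) = ∑_{k≥1} w_k t^{2k-1}/(2k-1)`. -/
noncomputable def Ups (w : ℕ → ℂ) : PowerSeries ℂ :=
  PowerSeries.mk fun m => if Odd m then w ((m + 1) / 2) / (m : ℂ) else 0

/-- The power series `log((1+t)/(1-t)) = 2 ∑_{n≥0} t^{2n+1}/(2n+1)`. -/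
noncomputable def LserC : PowerSeries ℂ :=
  PowerSeries.mk fun m => if Odd m then 2 / (m : ℂ) else 0

/-!
`Υ' = ∑ₖ w_{k+1} t^{2k}` is even, and by the partial fractions
`2/(2n+1) - 2/(2n+3) = 4/((2n+1)(2n+3))` the series
`(t² - 1) log((1+t)/(1-t)) = -2t + ∑ₙ 4 t^{2n+3}/((2n+1)(2n+3))` is odd. So the coefficient of
`t^{2k}` in `(1/(4t)) Υ'(t)(t²-1) log((1+t)/(1-t))` is
`-w_{k+1}/2 + ∑_{n<k} w_{k-n}/((2n+1)(2n+3))`, which turns the coefficient of `t^{2k}` in the ODE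
into the recursion at `k` for `k ≥ 1` and into `0` for `k = 0`; odd coefficients vanish by parity.
-/

open PowerSeries Finset

section Parity

variable {R : Type*} [Semiring R] {f g : PowerSeries R}

theorem coeff_mul_eq_zero_of_parity (hf : ∀ m, Odd m → coeff m f = 0)
    (hg : ∀ m, Even m → coeff m g = 0) {m : ℕ} (hm : Even m) : coeff m (f * g) = 0 := by
  rw [coeff_mul]
  refine sum_eq_zero fun p hp => ?_
  rw [HasAntidiagonal.mem_antidiagonal] at hp
  rcases Nat.even_or_odd p.1 with h | h
  · rw [hg p.2 (by simpa [← hp, Nat.even_add, h] using hm), mul_zero]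
  · rw [hf p.1 h, zero_mul]

theorem coeff_two_mul_add_one_mul_of_even (hf : ∀ m, Odd m → coeff m f = 0) (a : ℕ) :
    coeff (2 * a + 1) (f * g) =
      ∑ k ∈ range (a + 1), coeff (2 * (a - k)) f * coeff (2 * k + 1) g := by
  rw [coeff_mul, ← Nat.sum_antidiagonal_eq_sum_range_succ
    (fun i j => coeff (2 * j) f * coeff (2 * i + 1) g)]
  symm
  refine sum_bij_ne_zero (fun p _ _ => (2 * p.2, 2 * p.1 + 1)) ?_ ?_ ?_ ?_
  · intro p hp _
    rw [HasAntidiagonal.mem_antidiagonal] at hp ⊢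
    omega
  · intro p _ _ q _ _ h
    simp only [Prod.mk.injEq] at h
    ext <;> omega
  · rintro ⟨i, j⟩ hq hne
    rw [HasAntidiagonal.mem_antidiagonal] at hq
    obtain ⟨x, rfl⟩ : Even i := by
      by_contra h
      exact hne (by rw [hf i (Nat.not_even_iff_odd.mp h), zero_mul])
    obtain ⟨y, rfl⟩ : ∃ y, j = 2 * y + 1 := ⟨j / 2, by omega⟩
    refine ⟨(y, x), by rw [HasAntidiagonal.mem_antidiagonal]; omega, ?_, ?_⟩
    · simpa [two_mul] using hne
    · simp [two_mul]
  · intro p _ _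
    rfl

end Parity

theorem coeff_X_sq_sub_one_mul {R : Type*} [Ring R] (f : PowerSeries R) (m : ℕ) :
    coeff m ((X ^ 2 - 1) * f) = (if 2 ≤ m then coeff (m - 2) f else 0) - coeff m f := by
  rw [sub_mul, one_mul, map_sub, coeff_X_pow_mul']

theorem coeff_shift (f : PowerSeries ℂ) (m : ℕ) : coeff m (shift f) = coeff (m + 1) f := by
  simp [shift]

theorem coeff_Ups_of_even (w : ℕ → ℂ) {m : ℕ} (hm : Even m) : coeff m (Ups w) = 0 := by
  simp [Ups, Nat.not_odd_iff_even.mpr hm]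

theorem coeff_Ups_two_mul_add_one (w : ℕ → ℂ) (k : ℕ) :
    coeff (2 * k + 1) (Ups w) = w (k + 1) / (2 * k + 1) := by
  have hk : (2 * k + 1 + 1) / 2 = k + 1 := by omega
  simp [Ups, hk]

theorem coeff_dSer_Ups_of_odd (w : ℕ → ℂ) {m : ℕ} (hm : Odd m) :
    coeff m (dSer (Ups w)) = 0 := by
  simp [dSer, coeff_Ups_of_even w hm.add_one]

theorem coeff_dSer_Ups_two_mul (w : ℕ → ℂ) (k : ℕ) :
    coeff (2 * k) (dSer (Ups w)) = w (k + 1) := by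
  have hk : (2 * (k : ℂ) + 1) ≠ 0 := by exact_mod_cast (2 * k).succ_ne_zero
  simp only [dSer, coeff_mk, coeff_Ups_two_mul_add_one, Nat.cast_mul, Nat.cast_ofNat]
  field_simp

theorem coeff_LserC_of_even {m : ℕ} (hm : Even m) : coeff m LserC = 0 := by
  simp [LserC, Nat.not_odd_iff_even.mpr hm]

theorem coeff_LserC_two_mul_add_one (n : ℕ) : coeff (2 * n + 1) LserC = 2 / (2 * n + 1) := by
  simp [LserC]

theorem coeff_X_sq_sub_one_mul_LserC_of_even {m : ℕ} (hm : Even m) :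
    coeff m ((X ^ 2 - 1) * LserC) = 0 := by
  rw [coeff_X_sq_sub_one_mul, coeff_LserC_of_even hm]
  split_ifs with h
  · rw [coeff_LserC_of_even ((Nat.even_sub h).mpr (by simp [hm])), sub_zero]
  · rw [sub_zero]

theorem coeff_one_X_sq_sub_one_mul_LserC : coeff 1 ((X ^ 2 - 1) * LserC) = -2 := by
  rw [coeff_X_sq_sub_one_mul, if_neg (by norm_num)]
  simp [LserC]

theorem coeff_X_sq_sub_one_mul_LserC_two_mul_add_three (n : ℕ) :
    coeff (2 * n + 3) ((X ^ 2 - 1) * LserC) = 4 / ((2 * (n : ℂ) + 1) * (2 * n + 3)) := by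
  have h1 : (2 * (n : ℂ) + 1) ≠ 0 := by exact_mod_cast (2 * n).succ_ne_zero
  have h3 : (2 * (n : ℂ) + 3) ≠ 0 := by exact_mod_cast (2 * n + 2).succ_ne_zero
  rw [coeff_X_sq_sub_one_mul, if_pos (by omega), show 2 * n + 3 - 2 = 2 * n + 1 by omega,
    show 2 * n + 3 = 2 * (n + 1) + 1 by ring, coeff_LserC_two_mul_add_one,
    coeff_LserC_two_mul_add_one]
  push_cast
  rw [show 2 * ((n : ℂ) + 1) + 1 = 2 * n + 3 by ring]
  field_simp
  ring

theorem coeff_two_mul_add_one_dSer_Ups_mul (w : ℕ → ℂ) (a : ℕ) :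
    coeff (2 * a + 1) (dSer (Ups w) * ((X ^ 2 - 1) * LserC)) =
      -2 * w (a + 1) + 4 * ∑ n ∈ range a, w (a - n) / ((2 * n + 1) * (2 * n + 3)) := by
  rw [coeff_two_mul_add_one_mul_of_even (fun _ => coeff_dSer_Ups_of_odd w), sum_range_succ',
    mul_sum, add_comm]
  congr 1
  · rw [Nat.sub_zero, coeff_dSer_Ups_two_mul, coeff_one_X_sq_sub_one_mul_LserC, mul_comm]
  · refine sum_congr rfl fun n hn => ?_
    rw [show 2 * (n + 1) + 1 = 2 * n + 3 by ring, coeff_X_sq_sub_one_mul_LserC_two_mul_add_three,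
      show 2 * (a - (n + 1)) = 2 * (a - n - 1) by omega, coeff_dSer_Ups_two_mul,
      Nat.sub_add_cancel (by simp at hn; omega)]
    ring

/-- If `(w_k)` satisfies the recursion
`δ_{k,1} = -(s/(2(2k+1)) + 1/2) w_{k+1} + ∑_{n=0}^{k-1} w_{k-n}/((2n+1)(2n+3))`,
then `Υ(t) = ∑_{k≥1} w_k t^{2k-1}/(2k-1)` satisfies the formal power series ODE
`0 = t² + (s/2)(Υ/t - w₁) - w₁/2 - (1/(4t)) Υ'(t)(t²-1) log((1+t)/(1-t))`,
where division by `t` is the coefficient shift (the numerators have zero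
constant term). -/
theorem stmt18 (s : ℂ) (w : ℕ → ℂ)
    (hrec : ∀ k : ℕ, 1 ≤ k →
      (if k = 1 then (1 : ℂ) else 0) =
        -(s / (2 * (2 * (k : ℂ) + 1)) + 1 / 2) * w (k + 1) +
          ∑ n ∈ Finset.range k,
            w (k - n) / ((2 * (n : ℂ) + 1) * (2 * (n : ℂ) + 3))) :
    (0 : PowerSeries ℂ) =
      PowerSeries.X ^ 2
        + PowerSeries.C (s / 2) * (shift (Ups w) - PowerSeries.C (w 1))
        - PowerSeries.C (w 1 / 2)
        - PowerSeries.C (1 / 4) *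
            shift (dSer (Ups w) * (PowerSeries.X ^ 2 - 1) * LserC) := by
  ext m
  simp only [map_add, map_sub, coeff_C_mul, coeff_X_pow, coeff_C, coeff_shift, map_zero, mul_assoc]
  obtain ⟨a, rfl | rfl⟩ := Nat.even_or_odd' m
  · rw [coeff_Ups_two_mul_add_one, coeff_two_mul_add_one_dSer_Ups_mul]
    rcases Nat.eq_zero_or_pos a with rfl | ha
    · simp only [Nat.mul_zero, reduceIte, OfNat.zero_ne_ofNat, range_zero, sum_empty,
        Nat.cast_zero]
      ring
    · simp only [show 2 * a = 2 ↔ a = 1 by omega, if_neg (show 2 * a ≠ 0 by omega), hrec a ha,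
        ← div_div]
      ring
  · have hodd : Even (2 * a + 1 + 1) := ⟨a + 1, by ring⟩
    rw [coeff_Ups_of_even w hodd, coeff_mul_eq_zero_of_parity (fun _ => coeff_dSer_Ups_of_odd w)
      (fun _ => coeff_X_sq_sub_one_mul_LserC_of_even) hodd]
    simp
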